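/- arXiv:2208.00512 — 14 statements merged into one kernel-verified Lean document; each statement's English description precedes it below -/
import Mathlib

section
/- Let R be a commutative ring, let n ≥ 1 and m ≥ 1 be natural numbers, and let α : Fin n → R be such that α i - α j is a unit of R whenever i ≠ j. Set F = (∏_{i : Fin n} (X - C (α i)))^m ∈ R[X]. Then for every g ∈ R[X], F divides g if and only if X^m divides Polynomial.taylor (α i) g for every i : Fin n. Consequently, the ring homomorphism R[X] → ∏_{i : Fin n} R[X]/⟨X^m⟩ sending g to the tuple whose i-th component is the residue of Polynomial.taylor (α i) g modulo X^m has kernel exactly the ideal generated by F, and hence induces an injective ring homomorphism (the generalized Mattson–Solomon map) from R[X]/⟨F⟩ into the product ring ∏_{i : Fin n} R[X]/⟨X^m⟩. -/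
open Polynomial

/-!
The Taylor shift by `a` is a ring automorphism of `R[X]` sending `X - C a` to `X`, so
`(X - C a)^m ∣ g` iff `X^m ∣ taylor a g`. When the differences `α i - α j` are units,
the factors `(X - C (α i))^m` are pairwise coprime, so their product divides `g` iff each
of them does. Hence `⟨(∏ i, (X - C (α i)))^m⟩` is the kernel of
`g ↦ (taylor (α i) g mod X^m)_i`, which therefore descends injectively to the quotient.
-/

namespace Polynomial

variable {R : Type*} [CommRing R]

theorem taylor_X_sub_C (a : R) : taylor a (X - C a) = X := by
  simp [taylor_X, taylor_C]

theorem X_sub_C_pow_dvd_iff_X_pow_dvd_taylor (a : R) (m : ℕ) (g : R[X]) :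
    (X - C a) ^ m ∣ g ↔ X ^ m ∣ taylor a g := by
  rw [← map_dvd_iff (taylorEquiv a), map_pow]
  exact Iff.of_eq (congrArg (· ^ m ∣ taylor a g) (taylor_X_sub_C a))

variable {ι : Type*}

theorem prod_X_sub_C_pow_dvd_iff [Fintype ι] {α : ι → R}
    (hα : Pairwise fun i j => IsUnit (α i - α j)) (m : ℕ) (g : R[X]) :
    (∏ i, (X - C (α i))) ^ m ∣ g ↔ ∀ i, X ^ m ∣ taylor (α i) g := by
  have hcop : Pairwise (Function.onFun IsCoprime fun i => (X - C (α i)) ^ m) :=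
    fun i j hij => (isCoprime_X_sub_C_of_isUnit_sub (hα hij)).pow
  rw [← Finset.prod_pow]
  simp only [← X_sub_C_pow_dvd_iff_X_pow_dvd_taylor]
  exact ⟨fun h i => (Finset.dvd_prod_of_mem (fun i => (X - C (α i)) ^ m)
    (Finset.mem_univ i)).trans h, Fintype.prod_dvd_of_coprime hcop⟩

noncomputable def mattsonSolomonHom (m : ℕ) (α : ι → R) :
    R[X] →+* (ι → R[X] ⧸ Ideal.span {(X : R[X]) ^ m}) :=
  RingHom.pi fun i => (Ideal.Quotient.mk _).comp (taylorAlgHom (α i)).toRingHom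

theorem mattsonSolomonHom_apply (m : ℕ) (α : ι → R) (g : R[X]) :
    mattsonSolomonHom m α g = fun i => Ideal.Quotient.mk _ (taylor (α i) g) :=
  rfl

theorem ker_mattsonSolomonHom [Fintype ι] {m : ℕ} {α : ι → R}
    (hα : Pairwise fun i j => IsUnit (α i - α j)) :
    RingHom.ker (mattsonSolomonHom m α) = Ideal.span {(∏ i, (X - C (α i))) ^ m} := by
  ext g
  simp [RingHom.mem_ker, Ideal.mem_span_singleton, prod_X_sub_C_pow_dvd_iff hα, funext_iff,
    mattsonSolomonHom_apply, Ideal.Quotient.eq_zero_iff_mem]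

end Polynomial

theorem generalized_mattson_solomon_general {R : Type*} [CommRing R] (n m : ℕ)
    (α : Fin n → R)
    (hα : ∀ i j : Fin n, i ≠ j → IsUnit (α i - α j)) :
    (∀ g : R[X],
      (∏ i : Fin n, (X - C (α i))) ^ m ∣ g ↔
        ∀ i : Fin n, (X : R[X]) ^ m ∣ Polynomial.taylor (α i) g) ∧
    (∀ g : R[X],
      g ∈ Ideal.span {(∏ i : Fin n, (X - C (α i))) ^ m} ↔
        ∀ i : Fin n,
          Ideal.Quotient.mk (Ideal.span {(X : R[X]) ^ m})
            (Polynomial.taylor (α i) g) = 0) ∧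
    ∃ ψ : (R[X] ⧸ Ideal.span {(∏ i : Fin n, (X - C (α i))) ^ m}) →+*
        (Fin n → R[X] ⧸ Ideal.span {(X : R[X]) ^ m}),
      Function.Injective ψ ∧
        ∀ g : R[X],
          ψ (Ideal.Quotient.mk _ g) =
            fun i : Fin n =>
              Ideal.Quotient.mk (Ideal.span {(X : R[X]) ^ m})
                (Polynomial.taylor (α i) g) := by
  have hα' : Pairwise fun i j => IsUnit (α i - α j) := fun i j => hα i j
  have hker := ker_mattsonSolomonHom (m := m) hα'
  refine ⟨prod_X_sub_C_pow_dvd_iff hα' m, fun g => ?_, ?_⟩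
  · rw [← hker, RingHom.mem_ker, mattsonSolomonHom_apply, funext_iff]
    rfl
  · refine ⟨Ideal.Quotient.lift _ (mattsonSolomonHom m α) fun g hg => by rwa [← hker] at hg,
      RingHom.lift_injective_of_ker_le_ideal _ _ hker.le, fun g => Ideal.Quotient.lift_mk _ _ _⟩

/-- The generalized Mattson–Solomon map for `F = (∏ i, (X - C (α i)))^m`:
`F ∣ g` iff `X^m` divides every Taylor shift `taylor (α i) g`; the map
`g ↦ (taylor (α i) g mod X^m)_i` has kernel `⟨F⟩` and induces an injective
ring homomorphism `R[X]/⟨F⟩ → ∏ i, R[X]/⟨X^m⟩`. -/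
theorem generalized_mattson_solomon {R : Type*} [CommRing R] (n m : ℕ)
    (hn : 1 ≤ n) (hm : 1 ≤ m) (α : Fin n → R)
    (hα : ∀ i j : Fin n, i ≠ j → IsUnit (α i - α j)) :
    (∀ g : R[X],
      (∏ i : Fin n, (X - C (α i))) ^ m ∣ g ↔
        ∀ i : Fin n, (X : R[X]) ^ m ∣ Polynomial.taylor (α i) g) ∧
    (∀ g : R[X],
      g ∈ Ideal.span {(∏ i : Fin n, (X - C (α i))) ^ m} ↔
        ∀ i : Fin n,
          Ideal.Quotient.mk (Ideal.span {(X : R[X]) ^ m})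
            (Polynomial.taylor (α i) g) = 0) ∧
    ∃ ψ : (R[X] ⧸ Ideal.span {(∏ i : Fin n, (X - C (α i))) ^ m}) →+*
        (Fin n → R[X] ⧸ Ideal.span {(X : R[X]) ^ m}),
      Function.Injective ψ ∧
        ∀ g : R[X],
          ψ (Ideal.Quotient.mk _ g) =
            fun i : Fin n =>
              Ideal.Quotient.mk (Ideal.span {(X : R[X]) ^ m})
                (Polynomial.taylor (α i) g) :=
  generalized_mattson_solomon_general n m α hα
end

section
/- Let R be a commutative ring, f ∈ R[X], and let i, m be natural numbers with i < m. Then f divides the i-th Hasse derivative of f^m, i.e., f ∣ Polynomial.hasseDeriv i (f^m). -/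
open Polynomial

/-! Expanding `f ^ (m + 1) = f * f ^ m` by the Leibniz rule for Hasse derivatives, every term
of `hasseDeriv i (f ^ (m + 1))` either keeps the factor `f` underived next to
`hasseDeriv i (f ^ m)`, or takes fewer than `i` derivatives of `f ^ m`; induction on `m` then
shows that `f ^ (m - i)` divides `hasseDeriv i (f ^ m)`. -/

theorem Polynomial.pow_sub_dvd_hasseDeriv_pow {R : Type*} [CommSemiring R] (f : R[X]) :
    ∀ (m i : ℕ), f ^ (m - i) ∣ hasseDeriv i (f ^ m)
  | 0, i => by simp
  | m + 1, i => by
    rw [pow_succ', hasseDeriv_mul]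
    refine Finset.dvd_sum fun ⟨j, k⟩ hjk => ?_
    rw [Finset.HasAntidiagonal.mem_antidiagonal] at hjk
    obtain rfl | hj := Nat.eq_zero_or_pos j
    · obtain rfl : k = i := by simpa using hjk
      rw [hasseDeriv_zero']
      calc f ^ (m + 1 - k) ∣ f ^ (m - k + 1) := pow_dvd_pow f (by omega)
        _ ∣ f * hasseDeriv k (f ^ m) := by
          rw [pow_succ']
          exact mul_dvd_mul_left f (pow_sub_dvd_hasseDeriv_pow f m k)
    · exact ((pow_dvd_pow f (by omega)).trans (pow_sub_dvd_hasseDeriv_pow f m k)).mul_left _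

/-- For `i < m`, `f` divides the `i`-th Hasse derivative of `f ^ m`. -/
theorem hasseDeriv_pow_dvd {R : Type*} [CommRing R] (f : R[X]) (i m : ℕ) (h : i < m) :
    f ∣ Polynomial.hasseDeriv i (f ^ m) :=
  (dvd_pow_self f (by omega)).trans (pow_sub_dvd_hasseDeriv_pow f m i)
end

section
/- Let S be a nontrivial finite commutative local ring and let m ≥ 2 be a natural number. Then the ideals of the quotient ring S[X]/⟨X^m⟩ are totally ordered by inclusion if and only if S is a field. -/
open Polynomial

/-!
Modulo `X ^ m` the coefficients of degree `< m` are well defined. If `m ≥ 2` and `a ∈ S`,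
comparing the ideals generated by `a` and by `X` in `S[X]/⟨X^m⟩` reads off, in degree `0`,
that `X ∣ a` forces `a = 0`, and, in degree `1`, that `a ∣ X` forces `a` to be a unit; so
totality makes every nonzero `a` a unit. Conversely, over a field every ideal of `S[X]`
containing `X ^ m` is `⟨X ^ i⟩` for some `i ≤ m`, and these form a chain.
-/

section

variable {R : Type*} [CommRing R]

theorem Ideal.Quotient.le_total_of_le_total_above {N : Ideal R}
    (h : ∀ I J : Ideal R, N ≤ I → N ≤ J → I ≤ J ∨ J ≤ I) (I J : Ideal (R ⧸ N)) :
    I ≤ J ∨ J ≤ I := by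
  have hN : ∀ K : Ideal (R ⧸ N), N ≤ K.comap (Ideal.Quotient.mk N) := fun K x hx => by
    simp [Ideal.Quotient.eq_zero_iff_mem.mpr hx]
  simpa only [Ideal.comap_le_comap_iff_of_surjective _ Ideal.Quotient.mk_surjective] using
    h _ _ (hN I) (hN J)

theorem le_total_of_span_prime_pow_le [IsDomain R] [IsPrincipalIdealRing R] {p : R}
    (hp : Prime p) (n : ℕ) (I J : Ideal R) (hI : Ideal.span {p ^ n} ≤ I)
    (hJ : Ideal.span {p ^ n} ≤ J) : I ≤ J ∨ J ≤ I := by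
  have span_pow : ∀ K : Ideal R, Ideal.span {p ^ n} ≤ K → ∃ i, K = Ideal.span {p ^ i} := by
    intro K hK
    obtain ⟨a, rfl⟩ := (IsPrincipalIdealRing.principal K).principal
    rw [Ideal.submodule_span_eq] at hK ⊢
    rw [Ideal.span_singleton_le_span_singleton, dvd_prime_pow hp] at hK
    obtain ⟨i, -, hai⟩ := hK
    exact ⟨i, Ideal.span_singleton_eq_span_singleton.mpr hai⟩
  obtain ⟨i, rfl⟩ := span_pow I hI
  obtain ⟨j, rfl⟩ := span_pow J hJ
  simp only [Ideal.span_singleton_le_span_singleton]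
  rcases le_total i j with hij | hij
  · exact .inr (pow_dvd_pow p hij)
  · exact .inl (pow_dvd_pow p hij)

end

namespace Polynomial

variable {R : Type*} [CommRing R] {m : ℕ}

local notation "mk" => Ideal.Quotient.mk (Ideal.span {(X : R[X]) ^ m})

theorem coeff_eq_of_mk_span_X_pow_eq {p q : R[X]} {d : ℕ} (hd : d < m) (h : mk p = mk q) :
    p.coeff d = q.coeff d := by
  rw [Ideal.Quotient.eq, Ideal.mem_span_singleton, X_pow_dvd_iff] at h
  simpa [sub_eq_zero] using h d hd

theorem eq_zero_of_mk_X_dvd_mk_C (hm : m ≠ 0) {a : R} (h : mk X ∣ mk (C a)) : a = 0 := by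
  obtain ⟨c, hc⟩ := h
  obtain ⟨p, rfl⟩ := Ideal.Quotient.mk_surjective c
  rw [← map_mul] at hc
  simpa using coeff_eq_of_mk_span_X_pow_eq (Nat.pos_of_ne_zero hm) hc

theorem isUnit_of_mk_C_dvd_mk_X (hm : 2 ≤ m) {a : R} (h : mk (C a) ∣ mk X) : IsUnit a := by
  obtain ⟨c, hc⟩ := h
  obtain ⟨p, rfl⟩ := Ideal.Quotient.mk_surjective c
  rw [← map_mul] at hc
  have hcoeff := coeff_eq_of_mk_span_X_pow_eq hm hc
  rw [coeff_X_one, coeff_C_mul] at hcoeff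
  exact IsUnit.of_mul_eq_one _ hcoeff.symm

theorem isField_of_le_total_ideal_quotient_span_X_pow [Nontrivial R] (hm : 2 ≤ m)
    (h : ∀ I J : Ideal (R[X] ⧸ Ideal.span {(X : R[X]) ^ m}), I ≤ J ∨ J ≤ I) : IsField R := by
  refine ⟨exists_pair_ne R, mul_comm, fun {a} ha => ?_⟩
  rcases h (Ideal.span {mk (C a)}) (Ideal.span {mk X}) with hle | hle <;>
    rw [Ideal.span_singleton_le_span_singleton] at hle
  · exact absurd (eq_zero_of_mk_X_dvd_mk_C (by omega) hle) ha
  · exact (isUnit_of_mk_C_dvd_mk_X hm hle).exists_right_inv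

theorem le_total_ideal_quotient_span_X_pow {K : Type*} [Field K] (m : ℕ)
    (I J : Ideal (K[X] ⧸ Ideal.span {(X : K[X]) ^ m})) : I ≤ J ∨ J ≤ I :=
  Ideal.Quotient.le_total_of_le_total_above (le_total_of_span_prime_pow_le prime_X m) I J

end Polynomial

theorem quotient_Xpow_chainRing_iff_isField_general {S : Type*} [CommRing S]
    [IsLocalRing S] (m : ℕ) (hm : 2 ≤ m) :
    (∀ I J : Ideal (S[X] ⧸ Ideal.span {(X : S[X]) ^ m}), I ≤ J ∨ J ≤ I) ↔ IsField S := by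
  refine ⟨isField_of_le_total_ideal_quotient_span_X_pow hm, fun hS => ?_⟩
  let := hS.toField
  exact le_total_ideal_quotient_span_X_pow m

/-- For a nontrivial finite commutative local ring `S` and `m ≥ 2`, the ideals of
`S[X]/⟨X^m⟩` are totally ordered by inclusion iff `S` is a field. -/
theorem quotient_Xpow_chainRing_iff_isField {S : Type*} [CommRing S] [Finite S]
    [IsLocalRing S] (m : ℕ) (hm : 2 ≤ m) :
    (∀ I J : Ideal (S[X] ⧸ Ideal.span {(X : S[X]) ^ m}), I ≤ J ∨ J ≤ I) ↔ IsField S :=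
  quotient_Xpow_chainRing_iff_isField_general m hm
end

section
/- Let R be a nontrivial commutative local ring, let n and m ≥ 1 be natural numbers, and let α : Fin n → R be such that α i - α j is a unit of R whenever i ≠ j. Then the quotient ring A = R[X]/⟨(∏_{i : Fin n} (X - C (α i)))^m⟩ has exactly 2^n idempotent elements, i.e., the set {e : A | e * e = e} has cardinality 2^n. -/
open Polynomial

/-!
The factors `(X - C (α i)) ^ m` are pairwise coprime, so by the Chinese remainder theorem the
quotient is the product of the rings `R[X] ⧸ ⟨(X - C (α i)) ^ m⟩`. Evaluation at `α i` maps each of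
these onto `R` with nilpotent kernel, and idempotents lift uniquely along such maps; so each factor
has as many idempotents as the local ring `R`, namely `0` and `1`.
-/

section Idempotents

variable {A B : Type*} [CommRing A] [CommRing B]

theorem RingHom.card_idempotents_eq_of_surjective_of_ker_isNilpotent (f : A →+* B)
    (hf : Function.Surjective f) (hker : ∀ x ∈ RingHom.ker f, IsNilpotent x) :
    Nat.card {e : A // IsIdempotentElem e} = Nat.card {e : B // IsIdempotentElem e} := by
  refine Nat.card_congr (Equiv.ofBijective (Subtype.map f fun _ he ↦ he.map f) ⟨?_, ?_⟩)
  · rintro ⟨e₁, he₁⟩ ⟨e₂, he₂⟩ h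
    refine Subtype.ext (eq_of_isNilpotent_sub_of_isIdempotentElem he₁ he₂ (hker _ ?_))
    rw [RingHom.mem_ker, map_sub, sub_eq_zero]
    exact congrArg Subtype.val h
  · rintro ⟨e, he⟩
    obtain ⟨e', he', rfl⟩ := exists_isIdempotentElem_eq_of_ker_isNilpotent f hker e (hf e) he
    exact ⟨⟨e', he'⟩, rfl⟩

theorem RingEquiv.card_idempotents_eq (f : A ≃+* B) :
    Nat.card {e : A // IsIdempotentElem e} = Nat.card {e : B // IsIdempotentElem e} :=
  RingHom.card_idempotents_eq_of_surjective_of_ker_isNilpotent f.toRingHom f.surjective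
    fun x hx ↦ ⟨1, by simpa using hx⟩

theorem Pi.card_idempotents {ι : Type*} [Fintype ι] (A : ι → Type*) [∀ i, CommRing (A i)] :
    Nat.card {e : ∀ i, A i // IsIdempotentElem e} =
      ∏ i, Nat.card {e : A i // IsIdempotentElem e} := by
  rw [← Nat.card_pi]
  exact Nat.card_congr <|
    (Equiv.subtypeEquivRight fun _ ↦ funext_iff).trans
      (Equiv.subtypePiEquivPi (p := fun _ a ↦ IsIdempotentElem a))

theorem IsLocalRing.isIdempotentElem_iff [IsLocalRing A] {e : A} :
    IsIdempotentElem e ↔ e = 0 ∨ e = 1 := by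
  refine ⟨fun he ↦ ?_, by rintro (rfl | rfl) <;> simp [IsIdempotentElem]⟩
  rcases IsLocalRing.isUnit_or_isUnit_one_sub_self e with hu | hu
  · exact .inr ((IsIdempotentElem.iff_eq_one_of_isUnit hu).mp he)
  · exact .inl (sub_eq_self.mp ((IsIdempotentElem.iff_eq_one_of_isUnit hu).mp he.one_sub))

theorem IsLocalRing.card_idempotents [IsLocalRing A] :
    Nat.card {e : A // IsIdempotentElem e} = 2 := by
  have : {e : A | IsIdempotentElem e} = {0, 1} := Set.ext fun _ ↦ isIdempotentElem_iff
  rw [← Set.coe_ofPred, this, Nat.card_coe_set_eq, Set.ncard_pair zero_ne_one]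

theorem Ideal.card_idempotents_quotient_span_prod {ι : Type*} [Fintype ι] {f : ι → A}
    (hf : Pairwise fun i j ↦ IsCoprime (f i) (f j)) :
    Nat.card {e : A ⧸ Ideal.span {∏ i, f i} // IsIdempotentElem e} =
      ∏ i, Nat.card {e : A ⧸ Ideal.span {f i} // IsIdempotentElem e} := by
  have hspan : Ideal.span {∏ i, f i} = ⨅ i, Ideal.span {f i} :=
    (Ideal.iInf_span_singleton hf).symm
  have hcop : Pairwise fun i j ↦ IsCoprime (Ideal.span {f i}) (Ideal.span {f j}) :=
    fun i j hij ↦ (Ideal.isCoprime_span_singleton_iff _ _).mpr (hf hij)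
  rw [← Pi.card_idempotents, RingEquiv.card_idempotents_eq
    ((Ideal.quotEquivOfEq hspan).trans (Ideal.quotientInfRingEquivPiQuotient _ hcop))]

end Idempotents

namespace Polynomial

variable {R : Type*} [CommRing R]

noncomputable def quotientSpanXSubCPowEval (a : R) {m : ℕ} (hm : m ≠ 0) :
    R[X] ⧸ Ideal.span {(X - C a) ^ m} →+* R :=
  Ideal.Quotient.lift _ (evalRingHom a) fun p hp ↦ by
    obtain ⟨q, rfl⟩ := Ideal.mem_span_singleton'.mp hp
    simp [zero_pow hm]

theorem quotientSpanXSubCPowEval_surjective (a : R) {m : ℕ} (hm : m ≠ 0) :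
    Function.Surjective (quotientSpanXSubCPowEval a hm) :=
  fun r ↦ ⟨Ideal.Quotient.mk _ (C r), by simp [quotientSpanXSubCPowEval]⟩

theorem isNilpotent_of_mem_ker_quotientSpanXSubCPowEval (a : R) {m : ℕ} (hm : m ≠ 0)
    (x : R[X] ⧸ Ideal.span {(X - C a) ^ m})
    (hx : x ∈ RingHom.ker (quotientSpanXSubCPowEval a hm)) :
    IsNilpotent x := by
  obtain ⟨p, rfl⟩ := Ideal.Quotient.mk_surjective x
  have hroot : p.IsRoot a := by simpa [quotientSpanXSubCPowEval] using hx
  refine ⟨m, ?_⟩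
  rw [← map_pow, Ideal.Quotient.eq_zero_iff_mem, Ideal.mem_span_singleton]
  exact pow_dvd_pow_of_dvd (dvd_iff_isRoot.mpr hroot) m

theorem card_idempotents_quotient_span_X_sub_C_pow (a : R) {m : ℕ} (hm : m ≠ 0) :
    Nat.card {e : R[X] ⧸ Ideal.span {(X - C a) ^ m} // IsIdempotentElem e} =
      Nat.card {e : R // IsIdempotentElem e} :=
  RingHom.card_idempotents_eq_of_surjective_of_ker_isNilpotent _
    (quotientSpanXSubCPowEval_surjective a hm)
    (isNilpotent_of_mem_ker_quotientSpanXSubCPowEval a hm)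

end Polynomial

/-- If `R` is a nontrivial commutative local ring, `m ≥ 1` and `α : Fin n → R` has
pairwise unit differences, then `R[X]/⟨(∏ i, (X - C (α i)))^m⟩` has exactly `2^n`
idempotents. -/
theorem card_idempotents_eq_two_pow {R : Type*} [CommRing R] [IsLocalRing R]
    (n m : ℕ) (hm : 1 ≤ m) (α : Fin n → R)
    (hα : ∀ i j : Fin n, i ≠ j → IsUnit (α i - α j)) :
    Nat.card {e : R[X] ⧸ Ideal.span {(∏ i : Fin n, (X - C (α i))) ^ m} // e * e = e}
      = 2 ^ n := by
  have hcop : Pairwise fun i j ↦ IsCoprime ((X - C (α i)) ^ m) ((X - C (α j)) ^ m) :=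
    fun i j hij ↦ (isCoprime_X_sub_C_of_isUnit_sub (hα i j hij)).pow
  change Nat.card {e : R[X] ⧸ _ // IsIdempotentElem e} = _
  rw [← Finset.prod_pow, Ideal.card_idempotents_quotient_span_prod hcop]
  simp only [card_idempotents_quotient_span_X_sub_C_pow _ (Nat.one_le_iff_ne_zero.mp hm),
    IsLocalRing.card_idempotents, Finset.prod_const, Finset.card_univ, Fintype.card_fin]
end

section
/- Let R be a nontrivial commutative local ring of prime characteristic p, let n and k be natural numbers, and let α : Fin n → R be such that α i - α j is a unit of R whenever i ≠ j. Set F = (∏_{j : Fin n} (X - C (α j)))^{p^k} and A = R[X]/⟨F⟩. Then for every subset I ⊆ Fin n, the ideal of A generated by the residue of (∏_{j ∈ I} (X - C (α j)))^{p^k} is generated by an idempotent element of A. -/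
open Polynomial

/-- Over a nontrivial commutative local ring of prime characteristic `p`, for `α` with
pairwise unit differences and `F = (∏ j, (X - C (α j)))^(p^k)`, the ideal of
`R[X]/⟨F⟩` generated by the residue of `(∏ j ∈ I, (X - C (α j)))^(p^k)` is generated
by an idempotent, for every `I ⊆ Fin n`. -/
theorem span_prod_pow_eq_span_idempotent {R : Type*} [CommRing R] [IsLocalRing R]
    (p : ℕ) (hp : p.Prime) [CharP R p] (n k : ℕ) (α : Fin n → R)
    (hα : ∀ i j : Fin n, i ≠ j → IsUnit (α i - α j)) (I : Finset (Fin n)) :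
    ∃ e : R[X] ⧸ Ideal.span {(∏ j : Fin n, (X - C (α j))) ^ p ^ k},
      e * e = e ∧
      Ideal.span {Ideal.Quotient.mk (Ideal.span {(∏ j : Fin n, (X - C (α j))) ^ p ^ k})
          ((∏ j ∈ I, (X - C (α j))) ^ p ^ k)} = Ideal.span {e} := by
  set F : R[X] := (∏ j : Fin n, (X - C (α j))) ^ p ^ k with hF
  set G : R[X] := (∏ j ∈ I, (X - C (α j))) ^ p ^ k with hG
  set H : R[X] := (∏ j ∈ Iᶜ, (X - C (α j))) ^ p ^ k with hH
  have hFGH : F = G * H := by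
    rw [hF, hG, hH, ← mul_pow, Finset.prod_mul_prod_compl]
  have hcop : IsCoprime G H := by
    refine IsCoprime.pow ?_
    refine IsCoprime.prod_left fun i hi => IsCoprime.prod_right fun j hj => ?_
    exact isCoprime_X_sub_C_of_isUnit_sub (hα i j (by
      intro h; subst h; exact (Finset.mem_compl.mp hj) hi))
  obtain ⟨a, b, hab⟩ := hcop
  set q := Ideal.Quotient.mk (Ideal.span {F}) with hq
  have hqF : q F = 0 := Ideal.Quotient.eq_zero_iff_mem.mpr (Ideal.mem_span_singleton_self F)
  refine ⟨q (a * G), ?_, ?_⟩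
  · have key : a * G * (a * G) = a * G + (-(a * b)) * F := by
      rw [hFGH]; linear_combination a * G * hab
    rw [← map_mul, key]
    simp only [map_add, map_mul, hqF, mul_zero, add_zero]
  · apply le_antisymm
    · rw [Ideal.span_singleton_le_span_singleton]
      refine ⟨q G, ?_⟩
      have key2 : G = a * G * G + b * F := by
        rw [hFGH]; linear_combination (-G) * hab
      conv_lhs => rw [key2]
      simp only [map_add, map_mul, hqF, mul_zero, add_zero]
    · rw [Ideal.span_singleton_le_span_singleton]
      exact ⟨q a, by rw [mul_comm a G, map_mul]⟩
end

section
/- Let R be a nontrivial commutative local ring of prime characteristic p, let n and k be natural numbers, and let α : Fin n → R be such that α i - α j is a unit of R whenever i ≠ j. Set F = (∏_{j : Fin n} (X - C (α j)))^{p^k} and A = R[X]/⟨F⟩. If an ideal C of A is generated by an idempotent element, then there exists a subset S ⊆ Fin n such that C is the ideal of A generated by the residue of (∏_{j ∈ S} (X - C (α j)))^{p^k}. -/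
/-!
Since the differences `α i - α j` are units, the factors `(X - C (α i)) ^ p ^ k` are pairwise
coprime, so by the Chinese remainder theorem `R[X] ⧸ ⟨F⟩` is the product of the rings
`R[X] ⧸ ⟨(X - C (α i)) ^ p ^ k⟩`. Each factor maps onto the local ring `R` by evaluation at
`α i` with nilpotent kernel, so its only idempotents are `0` and `1`. An idempotent `e` is
therefore the indicator of the set of components where it is `1`; if `S` is the set where it
is `0`, the residue `g` of `(∏ j ∈ S, (X - C (α j))) ^ p ^ k` vanishes on `S` and is a unit off
`S`, so `e * (g + 1 - e) = g` with `g + 1 - e` a unit.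
-/

open Function Polynomial

theorem IsLocalRing.eq_zero_or_one_of_isIdempotentElem {R : Type*} [CommRing R] [IsLocalRing R]
    {r : R} (hr : IsIdempotentElem r) : r = 0 ∨ r = 1 := by
  rcases isUnit_or_isUnit_one_sub_self r with h | h
  · exact Or.inr (h.mul_left_cancel (by rw [mul_one, hr.eq]))
  · exact Or.inl (h.mul_left_cancel (by rw [mul_zero, sub_mul, one_mul, hr.eq, sub_self]))

theorem RingHom.eq_zero_or_one_of_isIdempotentElem_of_ker_isNilpotent {A B : Type*}
    [CommRing A] [Ring B] (f : A →+* B) (hf : ∀ x ∈ RingHom.ker f, IsNilpotent x)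
    (hB : ∀ b : B, IsIdempotentElem b → b = 0 ∨ b = 1) {a : A} (ha : IsIdempotentElem a) :
    a = 0 ∨ a = 1 := by
  rcases hB _ (ha.map f) with h | h
  · exact Or.inl <| eq_of_isNilpotent_sub_of_isIdempotentElem ha .zero <|
      hf _ (by rw [RingHom.mem_ker, sub_zero, h])
  · exact Or.inr <| eq_of_isNilpotent_sub_of_isIdempotentElem ha .one <|
      hf _ (by rw [RingHom.mem_ker, map_sub, map_one, h, sub_self])

theorem Polynomial.eq_zero_or_one_of_isIdempotentElem_quotient_span_X_sub_C_pow {R : Type*}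
    [CommRing R] [IsLocalRing R] (a : R) (m : ℕ)
    {b : R[X] ⧸ Ideal.span {(X - C a) ^ m}} (hb : IsIdempotentElem b) : b = 0 ∨ b = 1 := by
  rcases eq_or_ne m 0 with rfl | hm
  · have : Subsingleton (R[X] ⧸ Ideal.span {(X - C a) ^ 0}) := by
      rw [Ideal.Quotient.subsingleton_iff, pow_zero, Ideal.span_singleton_one]
    exact Or.inl (Subsingleton.elim b 0)
  have hvanish : ∀ g ∈ Ideal.span {(X - C a) ^ m}, evalRingHom a g = 0 := by
    intro g hg
    obtain ⟨c, rfl⟩ := Ideal.mem_span_singleton.mp hg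
    simp [zero_pow hm]
  refine (Ideal.Quotient.lift _ (evalRingHom a) hvanish)
    |>.eq_zero_or_one_of_isIdempotentElem_of_ker_isNilpotent ?_
      (fun _ ↦ IsLocalRing.eq_zero_or_one_of_isIdempotentElem) hb
  intro x hx
  obtain ⟨g, rfl⟩ := Ideal.Quotient.mk_surjective x
  have hroot : (X - C a) ∣ g := dvd_iff_isRoot.mpr (by simpa using hx)
  refine ⟨m, ?_⟩
  rw [← map_pow, Ideal.Quotient.eq_zero_iff_mem, Ideal.mem_span_singleton]
  exact pow_dvd_pow_of_dvd hroot m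

theorem Ideal.Quotient.isUnit_mk_span_singleton_of_isCoprime {R : Type*} [CommRing R] {a b : R}
    (h : IsCoprime a b) : IsUnit (Ideal.Quotient.mk (Ideal.span {a}) b) := by
  obtain ⟨u, v, huv⟩ := h
  refine IsUnit.of_mul_eq_one (Ideal.Quotient.mk _ v) ?_
  rw [← map_mul, ← map_one (Ideal.Quotient.mk _), Ideal.Quotient.eq, Ideal.mem_span_singleton]
  exact ⟨-u, by linear_combination huv⟩

theorem Ideal.Quotient.mk_span_singleton_prod_eq_zero {R ι : Type*} [CommRing R] (f : ι → R)
    {s : Finset ι} {i : ι} (hi : i ∈ s) :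
    Ideal.Quotient.mk (Ideal.span {f i}) (∏ j ∈ s, f j) = 0 :=
  eq_zero_iff_mem.mpr (mem_span_singleton.mpr (Finset.dvd_prod_of_mem f hi))

theorem Ideal.Quotient.isUnit_mk_span_singleton_prod {R ι : Type*} [CommRing R] {f : ι → R}
    (hf : Pairwise (IsCoprime on f)) {s : Finset ι} {i : ι} (hi : i ∉ s) :
    IsUnit (Ideal.Quotient.mk (Ideal.span {f i}) (∏ j ∈ s, f j)) :=
  isUnit_mk_span_singleton_of_isCoprime <|
    IsCoprime.prod_right fun _ hj ↦ hf (ne_of_mem_of_not_mem hj hi).symm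

noncomputable def Ideal.quotientSpanProdEquivPiQuotient {R ι : Type*} [CommRing R] [Fintype ι]
    (f : ι → R) (hf : Pairwise (IsCoprime on f)) :
    R ⧸ Ideal.span {∏ i, f i} ≃+* ∀ i, R ⧸ Ideal.span {f i} :=
  (quotEquivOfEq (iInf_span_singleton fun _ _ hij ↦ hf hij).symm).trans
    (quotientInfRingEquivPiQuotient _ fun _ _ hij ↦
      (isCoprime_span_singleton_iff _ _).mpr (hf hij))

theorem Ideal.span_singleton_eq_of_ringEquiv_pi {A ι : Type*} {B : ι → Type*} [CommRing A]
    [∀ i, CommRing (B i)] (φ : A ≃+* ∀ i, B i) {e g : A}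
    (h : ∀ i, (φ e i = 0 ∧ φ g i = 0) ∨ (φ e i = 1 ∧ IsUnit (φ g i))) :
    Ideal.span {e} = Ideal.span {g} := by
  have hu : IsUnit (g + (1 - e)) := by
    rw [← isUnit_map_iff φ, Pi.isUnit_iff]
    intro i
    rcases h i with ⟨he, hg⟩ | ⟨he, hg⟩ <;> simp [he, hg]
  have hg : e * (g + (1 - e)) = g := φ.injective <| funext fun i ↦ by
    rcases h i with ⟨he, hg⟩ | ⟨he, hg⟩ <;> simp [he, hg]
  rw [← hg, span_singleton_mul_right_unit hu]

theorem ideal_of_idempotent_eq_span_prod_pow_general {R : Type*} [CommRing R] [IsLocalRing R]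
    (p : ℕ) (n k : ℕ) (α : Fin n → R)
    (hα : ∀ i j : Fin n, i ≠ j → IsUnit (α i - α j))
    (C : Ideal (R[X] ⧸ Ideal.span {(∏ j : Fin n, (X - Polynomial.C (α j))) ^ p ^ k}))
    (hC : ∃ e, e * e = e ∧ C = Ideal.span {e}) :
    ∃ S : Finset (Fin n),
      C = Ideal.span {Ideal.Quotient.mk
          (Ideal.span {(∏ j : Fin n, (X - Polynomial.C (α j))) ^ p ^ k})
          ((∏ j ∈ S, (X - Polynomial.C (α j))) ^ p ^ k)} := by
  obtain ⟨e, he, rfl⟩ := hC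
  let f (i : Fin n) : R[X] := (X - Polynomial.C (α i)) ^ p ^ k
  have hf : Pairwise (IsCoprime on f) := fun i j hij ↦
    (isCoprime_X_sub_C_of_isUnit_sub (hα i j hij)).pow
  let φ := (Ideal.quotEquivOfEq (by rw [Finset.prod_pow])).trans
    (Ideal.quotientSpanProdEquivPiQuotient f hf)
  have hφ (g : R[X]) (i : Fin n) : φ (Ideal.Quotient.mk _ g) i = Ideal.Quotient.mk _ g := rfl
  have hφe (i : Fin n) : φ e i = 0 ∨ φ e i = 1 :=
    eq_zero_or_one_of_isIdempotentElem_quotient_span_X_sub_C_pow _ _ <| by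
      rw [IsIdempotentElem, ← Pi.mul_apply, ← map_mul, he]
  classical
  let S : Finset (Fin n) := {i | φ e i = 0}
  refine ⟨S, Ideal.span_singleton_eq_of_ringEquiv_pi φ fun i ↦ ?_⟩
  rw [hφ, ← Finset.prod_pow S]
  by_cases hi : φ e i = 0
  · exact Or.inl ⟨hi, Ideal.Quotient.mk_span_singleton_prod_eq_zero f (by simpa [S] using hi)⟩
  · exact Or.inr ⟨(hφe i).resolve_left hi,
      Ideal.Quotient.isUnit_mk_span_singleton_prod hf (by simpa [S] using hi)⟩

/-- Over a nontrivial commutative local ring of prime characteristic `p`, for `α` with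
pairwise unit differences and `F = (∏ j, (X - C (α j)))^(p^k)`, every ideal of
`R[X]/⟨F⟩` generated by an idempotent is the ideal generated by the residue of
`(∏ j ∈ S, (X - C (α j)))^(p^k)` for some `S ⊆ Fin n`. -/
theorem ideal_of_idempotent_eq_span_prod_pow {R : Type*} [CommRing R] [IsLocalRing R]
    (p : ℕ) (hp : p.Prime) [CharP R p] (n k : ℕ) (α : Fin n → R)
    (hα : ∀ i j : Fin n, i ≠ j → IsUnit (α i - α j))
    (C : Ideal (R[X] ⧸ Ideal.span {(∏ j : Fin n, (X - Polynomial.C (α j))) ^ p ^ k}))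
    (hC : ∃ e, e * e = e ∧ C = Ideal.span {e}) :
    ∃ S : Finset (Fin n),
      C = Ideal.span {Ideal.Quotient.mk
          (Ideal.span {(∏ j : Fin n, (X - Polynomial.C (α j))) ^ p ^ k})
          ((∏ j ∈ S, (X - Polynomial.C (α j))) ^ p ^ k)} :=
  ideal_of_idempotent_eq_span_prod_pow_general p n k α hα C hC
end

section
/- Let R be a nontrivial commutative local ring of prime characteristic p, let n and k be natural numbers, and let α : Fin n → R be such that α i - α j is a unit of R whenever i ≠ j. Let Fin n be partitioned into pairwise disjoint nonempty blocks B_1, …, B_r whose union is Fin n, and set f_t = ∏_{j ∈ B_t} (X - C (α j)) for 1 ≤ t ≤ r. Then there is a ring isomorphism R[X]/⟨(∏_{j : Fin n} (X - C (α j)))^{p^k}⟩ ≅ ∏_{t=1}^{r} R[X]/⟨f_t^{p^k}⟩. -/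
open Polynomial

/-- Over a nontrivial commutative local ring of prime characteristic `p`, if `Fin n`
is partitioned into pairwise disjoint nonempty blocks `B 1, …, B r` and
`f_t = ∏ j ∈ B t, (X - C (α j))`, then
`R[X]/⟨(∏ j, (X - C (α j)))^(p^k)⟩ ≅ ∏ t, R[X]/⟨f_t^(p^k)⟩`. -/
theorem quotient_iso_pi_of_partition {R : Type*} [CommRing R] [IsLocalRing R]
    (p : ℕ) (hp : p.Prime) [CharP R p] (n k r : ℕ) (α : Fin n → R)
    (hα : ∀ i j : Fin n, i ≠ j → IsUnit (α i - α j))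
    (B : Fin r → Finset (Fin n))
    (hdisj : ∀ s t : Fin r, s ≠ t → Disjoint (B s) (B t))
    (hne : ∀ t : Fin r, (B t).Nonempty)
    (hcover : ∀ j : Fin n, ∃ t : Fin r, j ∈ B t) :
    Nonempty
      ((R[X] ⧸ Ideal.span {(∏ j : Fin n, (X - C (α j))) ^ p ^ k}) ≃+*
        ∀ t : Fin r, R[X] ⧸ Ideal.span {(∏ j ∈ B t, (X - C (α j))) ^ p ^ k}) := by
  set f : Fin r → R[X] := fun t => (∏ j ∈ B t, (X - C (α j))) ^ p ^ k with hf
  have hcop : ∀ s t : Fin r, s ≠ t → IsCoprime (f s) (f t) := by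
    intro s t hst
    refine IsCoprime.pow ?_
    refine IsCoprime.prod_left fun i hi => IsCoprime.prod_right fun j hj => ?_
    refine Polynomial.isCoprime_X_sub_C_of_isUnit_sub (hα i j ?_)
    rintro rfl
    exact Finset.disjoint_left.1 (hdisj s t hst) hi hj
  have huniv : (Finset.univ : Finset (Fin n)) = Finset.univ.biUnion B := by
    ext j
    simpa using hcover j
  have hprod : (∏ j : Fin n, (X - C (α j))) ^ p ^ k = ∏ t : Fin r, f t := by
    have h2 : ∏ j : Fin n, (X - C (α j)) = ∏ t : Fin r, ∏ j ∈ B t, (X - C (α j)) := by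
      rw [huniv]
      exact Finset.prod_biUnion fun s _ t _ hst => hdisj s t hst
    rw [hf, h2, ← Finset.prod_pow]
  rw [hprod, ← Ideal.iInf_span_singleton (fun i j h => hcop i j h)]
  exact ⟨Ideal.quotientInfRingEquivPiQuotient (fun t => Ideal.span {f t})
    (fun s t hst => (Ideal.isCoprime_span_singleton_iff _ _).2 (hcop s t hst))⟩
end

section
/- Let R be a commutative ring and let F ∈ R[X] be monic of degree N ≥ 1 such that the constant coefficient F.coeff 0 is a unit of R. If g ∈ R[X] satisfies ((g * h) %ₘ F).coeff 0 = 0 for every h ∈ R[X], then F divides g. (In other words, the pairing ⟨g, h⟩₀ = ((g h) mod F)(0) on R[X]/⟨F⟩ is non-degenerate.) -/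
open Polynomial

/-!
Since `F(0)` is a unit, `X` is invertible modulo `F`: writing `F = X * F.divX + C (F.coeff 0)`,
the polynomial `u = -C (F.coeff 0)⁻¹ * F.divX` satisfies `X * u ≡ 1 [mod F]`. Hence if `p`
pairs to zero with everything and `p(0) = 0`, then so does `p.divX ≡ p * u`, since
`p.divX * h ≡ p * (u * h)`. Applied repeatedly to the reduced remainder `g %ₘ F`, whose
pairing with `1` is its constant coefficient, this kills all its coefficients.
-/

namespace Polynomial

variable {R : Type*} [CommRing R] {F : R[X]}

theorem exists_dvd_X_mul_sub_one_of_isUnit_coeff_zero (h0 : IsUnit (F.coeff 0)) :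
    ∃ u : R[X], F ∣ X * u - 1 := by
  obtain ⟨v, hv⟩ := h0
  refine ⟨-C (↑v⁻¹ : R) * F.divX, -C (↑v⁻¹ : R), ?_⟩
  have hinv : C (↑v⁻¹ : R) * C (F.coeff 0) = 1 := by
    rw [← C_mul, ← hv, Units.inv_mul, C_1]
  linear_combination (-C (↑v⁻¹ : R)) * X_mul_divX_add F + hinv

theorem coeff_zero_mul_modByMonic_eq_zero_of_dvd_sub (hF : F.Monic) {p q : R[X]}
    (hpq : F ∣ p - q) (hp : ∀ h : R[X], ((p * h) %ₘ F).coeff 0 = 0) (h : R[X]) :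
    ((q * h) %ₘ F).coeff 0 = 0 := by
  have hqp : F ∣ q * h - p * h := by
    rw [← sub_mul]
    exact (dvd_sub_comm.mp hpq).mul_right h
  rw [modByMonic_eq_of_dvd_sub hF hqp]
  exact hp h

theorem coeff_zero_divX_mul_modByMonic_eq_zero (hF : F.Monic) {u p : R[X]}
    (hu : F ∣ X * u - 1) (hp0 : p.coeff 0 = 0)
    (hp : ∀ h : R[X], ((p * h) %ₘ F).coeff 0 = 0) (h : R[X]) :
    ((p.divX * h) %ₘ F).coeff 0 = 0 := by
  have hpX : p = X * p.divX := by
    simpa [hp0] using (X_mul_divX_add p).symm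
  have hpu : F ∣ p * u - p.divX := by
    have hpu_eq : p * u - p.divX = p.divX * (X * u - 1) := by linear_combination u * hpX
    rw [hpu_eq]
    exact hu.mul_left _
  exact coeff_zero_mul_modByMonic_eq_zero_of_dvd_sub hF hpu
    (fun k => mul_assoc p u k ▸ hp (u * k)) h

theorem eq_zero_of_coeff_zero_mul_modByMonic_eq_zero (hF : F.Monic) (h0 : IsUnit (F.coeff 0))
    {p : R[X]} (hpF : p.degree < F.degree) (hp : ∀ h : R[X], ((p * h) %ₘ F).coeff 0 = 0) :
    p = 0 := by
  nontriviality R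
  obtain ⟨u, hu⟩ := exists_dvd_X_mul_sub_one_of_isUnit_coeff_zero h0
  ext k
  induction k generalizing p with
  | zero => simpa [(modByMonic_eq_self_iff hF).mpr hpF] using hp 1
  | succ k ih =>
    rcases eq_or_ne p 0 with rfl | hp_ne
    · rfl
    have hp0 : p.coeff 0 = 0 := by
      simpa [(modByMonic_eq_self_iff hF).mpr hpF] using hp 1
    rw [← coeff_divX]
    exact ih ((degree_divX_lt hp_ne).trans hpF)
      (coeff_zero_divX_mul_modByMonic_eq_zero hF hu hp0 hp)

end Polynomial

theorem nondegenerate_zero_inner_product_general {R : Type*} [CommRing R] (F : R[X])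
    (hF : F.Monic) (h0 : IsUnit (F.coeff 0)) (g : R[X])
    (hg : ∀ h : R[X], ((g * h) %ₘ F).coeff 0 = 0) :
    F ∣ g := by
  nontriviality R
  have hr : ∀ h : R[X], ((g %ₘ F * h) %ₘ F).coeff 0 = 0 :=
    coeff_zero_mul_modByMonic_eq_zero_of_dvd_sub hF (dvd_sub_comm.mp (dvd_modByMonic_sub g F)) hg
  rw [← modByMonic_eq_zero_iff_dvd hF]
  exact eq_zero_of_coeff_zero_mul_modByMonic_eq_zero hF h0 (degree_modByMonic_lt g hF) hr

/-- For a monic `F` of degree `≥ 1` with unit constant coefficient, the pairing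
`⟨g, h⟩₀ = ((g h) %ₘ F).coeff 0` on `R[X]/⟨F⟩` is non-degenerate: if
`((g * h) %ₘ F).coeff 0 = 0` for all `h`, then `F ∣ g`. -/
theorem nondegenerate_zero_inner_product {R : Type*} [CommRing R] (F : R[X])
    (hF : F.Monic) (hN : 1 ≤ F.natDegree) (h0 : IsUnit (F.coeff 0)) (g : R[X])
    (hg : ∀ h : R[X], ((g * h) %ₘ F).coeff 0 = 0) :
    F ∣ g :=
  nondegenerate_zero_inner_product_general F hF h0 g hg
end

section
/- Let R be a commutative ring and let F ∈ R[X] be monic of degree N ≥ 1 such that the constant coefficient F.coeff 0 is a unit of R. Let C be an ideal of R[X] with F ∈ C. Then for every g ∈ R[X]: ((g * h) %ₘ F).coeff 0 = 0 for all h ∈ C if and only if F divides g * h for all h ∈ C. (That is, the ⊥₀-dual of the polycyclic code C ⊆ R[X]/⟨F⟩ equals the annihilator of C; in particular the ⊥₀-dual is an ideal, i.e., again a polycyclic code.) -/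
/-!
Since `C` is an ideal, `g` being `⊥₀`-orthogonal to `C` makes the constant coefficient of
`X ^ k * r %ₘ F` vanish for every `k`, where `r = (g * h) %ₘ F`. If `r ≠ 0` had degree `m < N`,
then `X ^ (N - m) * r` has degree `N` and zero constant term, so its remainder is
`X ^ (N - m) * r - lc(r) • F`, with constant coefficient `-F(0) lc(r)`; as `F(0)` is a unit this
forces `lc(r) = 0`, a contradiction.
-/

open Polynomial

namespace Polynomial

variable {R : Type*} [Ring R]

theorem modByMonic_eq_sub_of_degree_eq {p F : R[X]} (hF : F.Monic)
    (hp : p.degree = F.degree) : p %ₘ F = p - F * C p.leadingCoeff := by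
  nontriviality R
  have hp0 : p ≠ 0 := fun h => hF.ne_zero (degree_eq_bot.mp (by rw [← hp, h, degree_zero]))
  refine (div_modByMonic_unique _ _ hF ⟨sub_add_cancel _ _, ?_⟩).2
  simpa [natDegree_eq_of_degree_eq hp, hp] using div_wf_lemma ⟨hp.ge, hp0⟩ hF

theorem coeff_zero_X_pow_mul_modByMonic {r F : R[X]} (hF : F.Monic) (hr : r ≠ 0)
    (hrF : r.natDegree < F.natDegree) :
    ((X ^ (F.natDegree - r.natDegree) * r) %ₘ F).coeff 0 = -(F.coeff 0 * r.leadingCoeff) := by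
  nontriviality R
  have hdeg : (X ^ (F.natDegree - r.natDegree) * r).degree = F.degree := by
    rw [(monic_X_pow _).degree_mul_comm, (monic_X_pow _).degree_mul, degree_X_pow,
      degree_eq_natDegree hr, degree_eq_natDegree hF.ne_zero, ← Nat.cast_add,
      Nat.add_sub_cancel' hrF.le]
  rw [modByMonic_eq_sub_of_degree_eq hF hdeg, leadingCoeff_monic_mul (monic_X_pow _),
    coeff_sub, coeff_mul_C, coeff_X_pow_mul', if_neg (by omega), zero_sub]

theorem eq_zero_of_forall_coeff_zero_X_pow_mul_modByMonic {r F : R[X]}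
    (hF : F.Monic) (h0 : IsUnit (F.coeff 0)) (hrF : r.degree < F.degree)
    (h : ∀ k, ((X ^ k * r) %ₘ F).coeff 0 = 0) : r = 0 := by
  by_contra hr
  have hlc := h (F.natDegree - r.natDegree)
  rw [coeff_zero_X_pow_mul_modByMonic hF hr (natDegree_lt_natDegree hr hrF), neg_eq_zero,
    h0.mul_right_eq_zero, leadingCoeff_eq_zero] at hlc
  exact hr hlc

end Polynomial

theorem perp0_dual_eq_annihilator_general {R : Type*} [CommRing R] (F : R[X])
    (hF : F.Monic) (h0 : IsUnit (F.coeff 0))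
    (C : Ideal R[X]) (g : R[X]) :
    (∀ h ∈ C, ((g * h) %ₘ F).coeff 0 = 0) ↔ (∀ h ∈ C, F ∣ g * h) := by
  refine ⟨fun hperp h hh => ?_, fun hann h hh => ?_⟩
  · nontriviality R
    rw [← modByMonic_eq_zero_iff_dvd hF]
    refine eq_zero_of_forall_coeff_zero_X_pow_mul_modByMonic hF h0 (degree_modByMonic_lt _ hF)
      fun k => ?_
    have hmod : (X ^ k * ((g * h) %ₘ F)) %ₘ F = (g * (X ^ k * h)) %ₘ F :=
      modByMonic_eq_of_dvd_sub hF <| by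
        convert (dvd_modByMonic_sub (g * h) F).mul_left (X ^ k) using 1
        ring
    rw [hmod]
    exact hperp _ (C.mul_mem_left _ hh)
  · rw [(modByMonic_eq_zero_iff_dvd hF).mpr (hann h hh), coeff_zero]

/-- For a monic `F` of degree `≥ 1` with unit constant coefficient and an ideal
`C` of `R[X]` containing `F`, a polynomial `g` lies in the `⊥₀`-dual of `C`
(i.e. `((g * h) %ₘ F).coeff 0 = 0` for all `h ∈ C`) iff `g` annihilates `C`
modulo `F` (i.e. `F ∣ g * h` for all `h ∈ C`). -/
theorem perp0_dual_eq_annihilator {R : Type*} [CommRing R] (F : R[X])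
    (hF : F.Monic) (hN : 1 ≤ F.natDegree) (h0 : IsUnit (F.coeff 0))
    (C : Ideal R[X]) (hFC : F ∈ C) (g : R[X]) :
    (∀ h ∈ C, ((g * h) %ₘ F).coeff 0 = 0) ↔ (∀ h ∈ C, F ∣ g * h) :=
  perp0_dual_eq_annihilator_general F hF h0 C g
end

section
/- Let 𝔽_q be a finite field of characteristic p, let e ≥ 1 with p not dividing e, let k be a natural number, and let f ∈ 𝔽_q[X] be a monic polynomial dividing X^e - 1. Set W = 𝔽_q[Z]/⟨Z^{p^k} - 1⟩. Then there exists a ring isomorphism between 𝔽_q[X]/⟨Polynomial.expand (p^k) f⟩ and W[Y]/⟨f_W⟩, where f_W denotes the image of f in W[Y] under the coefficient map 𝔽_q → W. -/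
/-!
Put `n = p ^ k`, let `x` be the class of `X` in `K[X]/(f(X^n))`, and let `y`, `z` be the
classes of `Y`, `Z` in `W[Y]/(f_W)`. As `f ∣ X^e - 1`, we have `x^(en) = 1`, `y^e = 1` and
`z^n = 1`, and `n` is coprime to `e`. Choose `na ≡ 1 (mod e)` and `eb ≡ 1 (mod n)`. Then
`x ↦ y^a z` and `y ↦ x^n`, `z ↦ x^(eb)` define mutually inverse homomorphisms: `(y^a z)^n = y`
and `(y^a z)^(eb) = z`, while `x^(na + eb) = x` because `na + eb ≡ 1 (mod en)` by the Chinese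
remainder theorem.
-/

open Polynomial

noncomputable instance {K : Type*} [Field K] (I : Ideal K[X]) : CommRing (K[X] ⧸ I) :=
  Ideal.Quotient.commRing I

theorem Nat.mul_add_mul_modEq_one {n e a b : ℕ} (ha : n * a ≡ 1 [MOD e])
    (hb : e * b ≡ 1 [MOD n]) : n * a + e * b ≡ 1 [MOD e * n] := by
  refine (Nat.modEq_and_modEq_iff_modEq_mul (Nat.coprime_of_mul_modEq_one b hb)).mp ⟨?_, ?_⟩
  · simpa using ha.add (Nat.modEq_zero_iff_dvd.mpr (dvd_mul_right e b))
  · simpa using (Nat.modEq_zero_iff_dvd.mpr (dvd_mul_right n a)).add hb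

section CommMonoid

variable {M : Type*} [CommMonoid M] {x y z : M} {e n a b : ℕ}

theorem pow_pow_mul_pow_eq_self (hx : x ^ (e * n) = 1) (ha : n * a ≡ 1 [MOD e])
    (hb : e * b ≡ 1 [MOD n]) : (x ^ n) ^ a * x ^ (e * b) = x := by
  rw [← pow_mul, ← pow_add, pow_eq_pow_of_modEq (Nat.mul_add_mul_modEq_one ha hb) hx, pow_one]

theorem pow_mul_pow_pow_eq_left (hy : y ^ e = 1) (hz : z ^ n = 1) (ha : n * a ≡ 1 [MOD e]) :
    (y ^ a * z) ^ n = y := by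
  rw [mul_pow, hz, mul_one, ← pow_mul, mul_comm, pow_eq_pow_of_modEq ha hy, pow_one]

theorem pow_mul_pow_pow_eq_right (hy : y ^ e = 1) (hz : z ^ n = 1) (hb : e * b ≡ 1 [MOD n]) :
    (y ^ a * z) ^ (e * b) = z := by
  rw [mul_pow, ← pow_mul, pow_eq_pow_of_modEq hb hz, pow_one, mul_left_comm, pow_mul, hy,
    one_pow, one_mul]

end CommMonoid

theorem pow_eq_one_of_aeval_eq_zero {R S : Type*} [CommRing R] [Ring S] [Algebra R S]
    {g : R[X]} {e : ℕ} (hg : g ∣ X ^ e - 1) {s : S} (hs : aeval s g = 0) : s ^ e = 1 := by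
  obtain ⟨h, hh⟩ := hg
  have := congrArg (aeval s) hh
  rwa [map_mul, hs, zero_mul, map_sub, map_pow, aeval_X, map_one, sub_eq_zero] at this

namespace AdjoinRoot

variable {R : Type*} [CommRing R] {g : R[X]} {e n : ℕ}

theorem root_X_pow_sub_one_pow (n : ℕ) : root (X ^ n - 1 : R[X]) ^ n = 1 :=
  pow_eq_one_of_aeval_eq_zero dvd_rfl (by rw [aeval_eq, mk_self])

theorem of_root_X_pow_sub_one_pow (f : (AdjoinRoot (X ^ n - 1 : R[X]))[X]) :
    of f (root (X ^ n - 1 : R[X])) ^ n = 1 := by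
  rw [← map_pow, root_X_pow_sub_one_pow, map_one]

theorem aeval_root_expand_pow (g : R[X]) (n : ℕ) : aeval (root (expand R n g) ^ n) g = 0 := by
  rw [← expand_aeval, aeval_eq, mk_self]

theorem aeval_root_map {S : Type*} [CommRing S] [Algebra R S] (g : R[X]) :
    aeval (root (g.map (algebraMap R S))) g = 0 := by
  rw [← aeval_map_algebraMap S, aeval_eq, mk_self]

theorem root_expand_pow_mul_eq_one (hg : g ∣ X ^ e - 1) :
    root (expand R n g) ^ (e * n) = 1 := by
  rw [mul_comm, pow_mul]
  exact pow_eq_one_of_aeval_eq_zero hg (aeval_root_expand_pow g n)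

theorem root_map_pow_eq_one {S : Type*} [CommRing S] [Algebra R S] (hg : g ∣ X ^ e - 1) :
    root (g.map (algebraMap R S)) ^ e = 1 :=
  pow_eq_one_of_aeval_eq_zero hg (aeval_root_map g)

variable (a b : ℕ) (hg : g ∣ X ^ e - 1)

noncomputable def expandToMap (ha : n * a ≡ 1 [MOD e]) :
    AdjoinRoot (expand R n g) →ₐ[R]
      AdjoinRoot (g.map (algebraMap R (AdjoinRoot (X ^ n - 1 : R[X])))) :=
  liftAlgHom _ (Algebra.ofId R _) (root _ ^ a * of _ (root _)) <| by
    change aeval _ (expand R n g) = 0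
    rw [expand_aeval,
      pow_mul_pow_pow_eq_left (root_map_pow_eq_one hg) (of_root_X_pow_sub_one_pow _) ha,
      aeval_root_map]

noncomputable def mapToExpand :
    AdjoinRoot (g.map (algebraMap R (AdjoinRoot (X ^ n - 1 : R[X])))) →ₐ[R]
      AdjoinRoot (expand R n g) :=
  liftAlgHom _
    (liftAlgHom _ (Algebra.ofId R _) (root _ ^ (e * b)) <| by
      rw [eval₂_sub, eval₂_X_pow, eval₂_one, ← pow_mul, mul_right_comm,
        pow_mul, root_expand_pow_mul_eq_one hg, one_pow, sub_self])
    (root _ ^ n) <| by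
      rw [eval₂_map, AlgHom.comp_algebraMap, ← aeval_def, aeval_root_expand_pow]

variable {a b hg}

@[simp]
theorem expandToMap_root (ha : n * a ≡ 1 [MOD e]) :
    expandToMap a hg ha (root _) = root _ ^ a * of _ (root (X ^ n - 1 : R[X])) :=
  liftAlgHom_root ..

@[simp]
theorem mapToExpand_root : mapToExpand b hg (root _) = root (expand R n g) ^ n :=
  liftAlgHom_root ..

@[simp]
theorem mapToExpand_of_root :
    mapToExpand b hg (of _ (root _)) = root (expand R n g) ^ (e * b) := by
  rw [mapToExpand, liftAlgHom_of, liftAlgHom_root]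

variable (hg) in
noncomputable def expandAlgEquivMap (ha : n * a ≡ 1 [MOD e]) (hb : e * b ≡ 1 [MOD n]) :
    AdjoinRoot (expand R n g) ≃ₐ[R]
      AdjoinRoot (g.map (algebraMap R (AdjoinRoot (X ^ n - 1 : R[X])))) :=
  AlgEquiv.ofAlgHom (expandToMap a hg ha) (mapToExpand b hg)
    (by
      have hy := root_map_pow_eq_one (S := AdjoinRoot (X ^ n - 1 : R[X])) hg
      have hz := of_root_X_pow_sub_one_pow (g.map (algebraMap R (AdjoinRoot (X ^ n - 1 : R[X]))))
      ext
      · change expandToMap a hg ha (mapToExpand b hg (of _ (root _))) = of _ (root _)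
        rw [mapToExpand_of_root, map_pow, expandToMap_root, pow_mul_pow_pow_eq_right hy hz hb]
      · rw [AlgHom.comp_apply, mapToExpand_root, map_pow, expandToMap_root,
          pow_mul_pow_pow_eq_left hy hz ha, AlgHom.id_apply])
    (by
      ext
      rw [AlgHom.comp_apply, expandToMap_root, map_mul, map_pow, mapToExpand_root,
        mapToExpand_of_root, pow_pow_mul_pow_eq_self (root_expand_pow_mul_eq_one hg) ha hb,
        AlgHom.id_apply])

end AdjoinRoot

theorem expand_quotient_iso_chain_ring_general {K : Type*} [Field K]
    (p : ℕ) (hp : p.Prime) (e : ℕ) (hpe : ¬ p ∣ e)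
    (k : ℕ) (f : K[X]) (hdvd : f ∣ X ^ e - 1) :
    Nonempty
      ((K[X] ⧸ Ideal.span {Polynomial.expand K (p ^ k) f}) ≃+*
        ((K[X] ⧸ Ideal.span {(X : K[X]) ^ p ^ k - 1})[X] ⧸
          Ideal.span
            {f.map (algebraMap K (K[X] ⧸ Ideal.span {(X : K[X]) ^ p ^ k - 1}))})) := by
  have hcop : (p ^ k).Coprime e := (hp.coprime_iff_not_dvd.mpr hpe).pow_left k
  obtain ⟨a, -, ha⟩ := Nat.exists_mul_mod_eq_of_coprime 1 hcop fun he ↦ hpe (he ▸ dvd_zero p)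
  obtain ⟨b, -, hb⟩ := Nat.exists_mul_mod_eq_of_coprime 1 hcop.symm (pow_ne_zero k hp.ne_zero)
  exact ⟨(AdjoinRoot.expandAlgEquivMap hdvd ha hb).toRingEquiv⟩

/-- Let `𝔽_q` have characteristic `p`, `p ∤ e`, and let `f` be monic dividing `X^e - 1`.
With `W = 𝔽_q[Z]/⟨Z^(p^k) - 1⟩`, there is a ring isomorphism
`𝔽_q[X]/⟨f(X^(p^k))⟩ ≃ W[Y]/⟨f_W⟩`. -/
theorem expand_quotient_iso_chain_ring {K : Type*} [Field K] [Fintype K]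
    (p : ℕ) (hp : p.Prime) [CharP K p] (e : ℕ) (he : 1 ≤ e) (hpe : ¬ p ∣ e)
    (k : ℕ) (f : K[X]) (hf : f.Monic) (hdvd : f ∣ X ^ e - 1) :
    Nonempty
      ((K[X] ⧸ Ideal.span {Polynomial.expand K (p ^ k) f}) ≃+*
        ((K[X] ⧸ Ideal.span {(X : K[X]) ^ p ^ k - 1})[X] ⧸
          Ideal.span
            {f.map (algebraMap K (K[X] ⧸ Ideal.span {(X : K[X]) ^ p ^ k - 1}))})) :=
  expand_quotient_iso_chain_ring_general p hp e hpe k f hdvd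
end

section
/- Let K be a finite field and let f ∈ K[Y] be monic of degree n ≥ 1 with f.coeff 0 ≠ 0. Set S = K[Y]/⟨f⟩ and let ε : S → K be the K-linear map sending the class of a polynomial g to (g %ₘ f).coeff 0. For an ideal D of S define D^{⊥₀} = {g ∈ S | ε(g · h) = 0 for all h ∈ D}, which is an ideal of S. Let α ≥ 1, let D : Fin α → Ideal S, and let A be an invertible α × α matrix over K. Define the matrix-product code [D] · A = {x : Fin α → S | there exist d : Fin α → S with d i ∈ D i for all i, such that x j = ∑_{i} (A i j) • (d i) for all j}, and for a subset M ⊆ (Fin α → S) define M^{⊥₀} = {z : Fin α → S | ∑_{i} ε(z i · x i) = 0 for all x ∈ M}. Then ([D] · A)^{⊥₀} equals the matrix-product code [fun i => (D i)^{⊥₀}] · (A⁻¹)ᵀ. -/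
open Polynomial Matrix

/-- The `⊥₀`-dual of a matrix-product code `[D₁,…,D_α]·A` over `S = K[Y]/⟨f⟩`
is the matrix-product code `[D₁^{⊥₀},…,D_α^{⊥₀}]·(A⁻¹)ᵀ`. -/
theorem matrix_product_code_perp0_dual {K : Type*} [Field K] [Fintype K]
    (f : K[X]) (hf : f.Monic) (hn : 1 ≤ f.natDegree) (h0 : f.coeff 0 ≠ 0)
    (ε : (K[X] ⧸ Ideal.span {f}) →ₗ[K] K)
    (hε : ∀ g : K[X], ε (Ideal.Quotient.mk (Ideal.span {f}) g) = (g %ₘ f).coeff 0)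
    (a : ℕ) (ha : 1 ≤ a) (D : Fin a → Ideal (K[X] ⧸ Ideal.span {f}))
    (A : Matrix (Fin a) (Fin a) K) (hA : IsUnit A) :
    {z : Fin a → K[X] ⧸ Ideal.span {f} |
        ∀ x ∈ {x : Fin a → K[X] ⧸ Ideal.span {f} |
            ∃ d : Fin a → K[X] ⧸ Ideal.span {f},
              (∀ i, d i ∈ D i) ∧ ∀ j, x j = ∑ i, A i j • d i},
          ∑ i, ε (z i * x i) = 0} =
      {x : Fin a → K[X] ⧸ Ideal.span {f} |
        ∃ d : Fin a → K[X] ⧸ Ideal.span {f},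
          (∀ i, d i ∈ {g : K[X] ⧸ Ideal.span {f} | ∀ h ∈ D i, ε (g * h) = 0}) ∧
            ∀ j, x j = ∑ i, (A⁻¹)ᵀ i j • d i} := by
  have hdet : IsUnit A.det := (Matrix.isUnit_iff_isUnit_det A).mp hA
  have hinv : A⁻¹ * A = 1 := Matrix.nonsing_inv_mul A hdet
  have hinv' : A * A⁻¹ = 1 := Matrix.mul_nonsing_inv A hdet
  ext z
  simp only [Set.mem_setOf_eq]
  constructor
  · intro hz
    refine ⟨fun i => ∑ j, A i j • z j, fun i h hh => ?_, fun j => ?_⟩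
    · -- ε ((∑ j, A i j • z j) * h) = 0
      have hmem : (fun j => A i j • h) ∈
          {x : Fin a → K[X] ⧸ Ideal.span {f} |
            ∃ d : Fin a → K[X] ⧸ Ideal.span {f},
              (∀ i, d i ∈ D i) ∧ ∀ j, x j = ∑ i, A i j • d i} := by
        refine ⟨Pi.single i h, fun k => ?_, fun j => ?_⟩
        · rcases eq_or_ne k i with rfl | hk
          · simpa using hh
          · simp [Pi.single_eq_of_ne hk]
        · rw [Finset.sum_eq_single i]
          · simp
          · intro k _ hk; simp [Pi.single_eq_of_ne hk]
          · simp
      have h0' := hz _ hmem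
      have key : ε ((∑ j, A i j • z j) * h) = ∑ j, ε (z j * (A i j • h)) := by
        rw [Finset.sum_mul, map_sum]
        congr 1; ext j
        rw [smul_mul_assoc, mul_smul_comm]
      rw [key, h0']
    · -- z j = ∑ i, (A⁻¹)ᵀ i j • ∑ k, A i k • z k
      have : ∀ k, (∑ i, A⁻¹ j i * A i k) = (1 : Matrix (Fin a) (Fin a) K) j k := by
        intro k; rw [← hinv, Matrix.mul_apply]
      calc z j = ∑ k, (1 : Matrix (Fin a) (Fin a) K) j k • z k := by
                simp [Matrix.one_apply]
        _ = ∑ k, (∑ i, A⁻¹ j i * A i k) • z k := by simp_rw [this]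
        _ = ∑ k, ∑ i, (A⁻¹ j i * A i k) • z k := by simp_rw [Finset.sum_smul]
        _ = ∑ i, ∑ k, (A⁻¹ j i * A i k) • z k := Finset.sum_comm
        _ = ∑ i, (A⁻¹)ᵀ i j • ∑ k, A i k • z k := by
                simp_rw [Matrix.transpose_apply, Finset.smul_sum, smul_smul]
  · rintro ⟨w, hw, hzw⟩ x ⟨d, hd, hx⟩
    have expand : ∀ j, ε (z j * x j) =
        ∑ i, ∑ k, (A⁻¹ j i * A k j) * ε (w i * d k) := by
      intro j
      rw [hzw j, hx j, Finset.sum_mul_sum, map_sum]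
      congr 1; ext i
      rw [map_sum]
      congr 1; ext k
      rw [Matrix.transpose_apply, smul_mul_smul_comm, ε.map_smul, smul_eq_mul]
    calc ∑ j, ε (z j * x j)
        = ∑ j, ∑ i, ∑ k, (A⁻¹ j i * A k j) * ε (w i * d k) := by
            simp_rw [expand]
      _ = ∑ i, ∑ k, ∑ j, (A⁻¹ j i * A k j) * ε (w i * d k) := by
            rw [Finset.sum_comm]; congr 1; ext i; rw [Finset.sum_comm]
      _ = ∑ i, ∑ k, (∑ j, A k j * A⁻¹ j i) * ε (w i * d k) := by
            congr 1; ext i; congr 1; ext k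
            rw [Finset.sum_mul]; congr 1; ext j; ring
      _ = ∑ i, ∑ k, (1 : Matrix (Fin a) (Fin a) K) k i * ε (w i * d k) := by
            simp_rw [← Matrix.mul_apply, hinv']
      _ = ∑ i, ε (w i * d i) := by
            refine Finset.sum_congr rfl fun i _ => ?_
            rw [Finset.sum_eq_single i]
            · rw [Matrix.one_apply_eq, one_mul]
            · intro k _ hk; rw [Matrix.one_apply_ne hk, zero_mul]
            · intro hi; exact absurd (Finset.mem_univ i) hi
      _ = 0 := by
            rw [Finset.sum_eq_zero]
            intro i _
            exact hw i (d i) (hd i)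
end

section
/- Let R be a commutative ring, let n, m ≥ 1 be natural numbers with N = n·m, and let α : Fin n → R be such that α i - α j is a unit of R whenever i ≠ j. Let F = ∏_{i : Fin n} (X - C (α i))^m ∈ R[X], a monic polynomial of degree N. Let C_F be the N × N companion matrix of F: C_F i j = 1 if j = i + 1 and i < N - 1, C_F (N-1) j = -(F.coeff j), and all other entries 0. Let J be the N × N matrix indexed by Fin n × Fin m (taken in lexicographic order) with J (i,a) (i,a) = α i, J (i,a) (i,a+1) = 1 for a < m - 1, and all other entries 0 (a block-diagonal matrix of n Jordan blocks of size m with eigenvalues α i). Then there exists an invertible N × N matrix V over R such that C_F * V = V * J, i.e., C_F and J are similar over R. -/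
open Polynomial Matrix

/-!
Take for `V` the matrix whose row `k` lists the Taylor coefficients of order `< m` of `X ^ k` at
the points `α i` (the jets of `X ^ k`). Multiplication by `X` acts on jets through the Jordan
matrix `J`, and the jets of `F` vanish, so `X ^ N` and `X ^ N - F` have the same jets; the latter
is the combination of lower powers recorded in the last row of the companion matrix. Hence
`C_F * V = V * J`. `V` is invertible because every family of jets is attained by a polynomial of
degree `< N`: by the Chinese remainder theorem for the pairwise coprime `(X - α i) ^ m`, followed
by reduction modulo `F`.
-/

namespace Matrix

variable {R : Type*} [CommRing R]

def jordanMatrix {ι : Type*} [DecidableEq ι] (α : ι → R) (m : ℕ) :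
    Matrix (ι × Fin m) (ι × Fin m) R :=
  of fun p q => if p = q then α p.1 else if p.1 = q.1 ∧ (q.2 : ℕ) = p.2 + 1 then 1 else 0

lemma jordanMatrix_eq_diagonal_add {ι : Type*} [DecidableEq ι] (α : ι → R) (m : ℕ) :
    jordanMatrix α m = diagonal (fun q => α q.1) +
      of fun p q => if p.1 = q.1 ∧ (q.2 : ℕ) = p.2 + 1 then 1 else 0 := by
  ext p q
  by_cases hpq : p = q
  · subst hpq
    simp [jordanMatrix]
  · simp [jordanMatrix, hpq]

end Matrix

namespace Polynomial

variable {R : Type*} [CommRing R] {ι : Type*}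

noncomputable def jets (α : ι → R) (m : ℕ) : R[X] →ₗ[R] ι × Fin m → R :=
  LinearMap.pi fun q => lcoeff R q.2 ∘ₗ taylor (α q.1)

@[simp]
lemma jets_apply (α : ι → R) (m : ℕ) (p : R[X]) (q : ι × Fin m) :
    jets α m p q = (taylor (α q.1) p).coeff q.2 :=
  rfl

lemma taylor_coeff_eq_zero_of_dvd {r : R} {m a : ℕ} {p : R[X]} (h : (X - C r) ^ m ∣ p)
    (ha : a < m) : (taylor r p).coeff a = 0 := by
  obtain ⟨q, rfl⟩ := h
  rw [taylor_mul, taylor_pow, map_sub, taylor_X, taylor_C, add_sub_cancel_right,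
    coeff_X_pow_mul', if_neg (by omega)]

lemma jets_eq_zero_of_forall_dvd {α : ι → R} {m : ℕ} {p : R[X]}
    (h : ∀ i, (X - C (α i)) ^ m ∣ p) : jets α m p = 0 :=
  _root_.funext fun q => taylor_coeff_eq_zero_of_dvd (h q.1) q.2.isLt

lemma jets_surjective [Finite ι] {α : ι → R} (hα : Pairwise fun i j => IsUnit (α i - α j))
    (m : ℕ) : Function.Surjective (jets α m) := by
  intro t
  have hcop : Pairwise fun i j =>
      IsCoprime (Ideal.span {(X - C (α i)) ^ m}) (Ideal.span {(X - C (α j)) ^ m}) := fun i j hij =>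
    (Ideal.isCoprime_span_singleton_iff _ _).mpr (isCoprime_X_sub_C_of_isUnit_sub (hα hij)).pow
  obtain ⟨p, hp⟩ := Ideal.exists_forall_sub_mem_ideal hcop
    fun i => ∑ a : Fin m, C (t (i, a)) * (X - C (α i)) ^ (a : ℕ)
  refine ⟨p, _root_.funext fun ⟨i, a⟩ => ?_⟩
  have hdvd := Ideal.mem_span_singleton.mp (hp i)
  have hcoeff := taylor_coeff_eq_zero_of_dvd hdvd a.isLt
  rw [map_sub, coeff_sub, sub_eq_zero] at hcoeff
  rw [jets_apply, hcoeff]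
  simp [coeff_X_pow, Fin.val_eq_val]

lemma exists_degree_lt_jets_eq [Nontrivial R] [Finite ι] {α : ι → R}
    (hα : Pairwise fun i j => IsUnit (α i - α j)) {m : ℕ} {F : R[X]} (hF : F.Monic) (hdvd : ∀ i, (X - C (α i)) ^ m ∣ F)
    (t : ι × Fin m → R) : ∃ p : R[X], p.degree < F.degree ∧ jets α m p = t := by
  obtain ⟨p, rfl⟩ := jets_surjective hα m t
  refine ⟨p %ₘ F, degree_modByMonic_lt p hF, ?_⟩
  rw [modByMonic_eq_sub_mul_div p F, map_sub,
    jets_eq_zero_of_forall_dvd fun i => (hdvd i).mul_right _, sub_zero]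

lemma jets_X_mul [Fintype ι] [DecidableEq ι] (α : ι → R) (m : ℕ) (p : R[X]) :
    jets α m (X * p) = jets α m p ᵥ* jordanMatrix α m := by
  ext ⟨i, a⟩
  rw [jordanMatrix_eq_diagonal_add, vecMul_add, Pi.add_apply, vecMul_diagonal, add_comm]
  simp only [jets_apply, taylor_mul, taylor_X, add_mul, coeff_add, coeff_C_mul, mul_comm (α i)]
  congr 1
  obtain ⟨_ | b, ha⟩ := a
  · simp [vecMul, dotProduct]
  · rw [coeff_X_mul, vecMul, dotProduct, Finset.sum_eq_single (i, ⟨b, by omega⟩)]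
    · simp
    · rintro ⟨j, c⟩ - hne
      simp only [of_apply, mul_ite, mul_one, mul_zero]
      rw [if_neg]
      rintro ⟨rfl, hc⟩
      exact hne (Prod.ext rfl (Fin.ext (by simp at hc ⊢; omega)))
    · simp

end Polynomial

namespace Matrix

variable {R : Type*} [CommRing R] {κ : Type*}

def companion (F : R[X]) (N : ℕ) : Matrix (Fin N) (Fin N) R :=
  of fun i j => if (i : ℕ) + 1 = N then -F.coeff j else if (j : ℕ) = i + 1 then 1 else 0

noncomputable def powersMatrix (L : R[X] →ₗ[R] κ → R) (N : ℕ) : Matrix (Fin N) κ R :=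
  of fun k => L (X ^ (k : ℕ))

lemma vecMul_powersMatrix [Fintype κ] (L : R[X] →ₗ[R] κ → R) {N : ℕ} (v : Fin N → R) :
    v ᵥ* powersMatrix L N = L (∑ k, C (v k) * X ^ (k : ℕ)) := by
  ext q
  simp only [map_sum, C_mul', map_smul, Finset.sum_apply, Pi.smul_apply, smul_eq_mul]
  rfl

lemma companion_mul_powersMatrix [Fintype κ] {F : R[X]} (hF : F.Monic) {N : ℕ}
    (hN : F.natDegree = N) {L : R[X] →ₗ[R] κ → R} {J : Matrix κ κ R}
    (hL : ∀ p, L (X * p) = L p ᵥ* J) (hLF : L F = 0) :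
    companion F N * powersMatrix L N = powersMatrix L N * J := by
  ext k q
  have hnext : (powersMatrix L N * J) k q = L (X ^ ((k : ℕ) + 1)) q := by
    rw [pow_succ', hL]
    rfl
  rw [hnext, mul_apply]
  by_cases hk : (k : ℕ) + 1 = N
  · have hlast : L (X ^ N) = -∑ j : Fin N, F.coeff j • L (X ^ (j : ℕ)) := by
      have hFsum := congrArg L hF.as_sum
      simp only [hLF, map_add, map_sum, C_mul', map_smul, hN] at hFsum
      rw [Fin.sum_univ_eq_sum_range (fun j => F.coeff j • L (X ^ j))]
      exact eq_neg_of_add_eq_zero_left hFsum.symm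
    simp [companion, powersMatrix, hk, hlast, Finset.sum_apply]
  · rw [Finset.sum_eq_single ⟨(k : ℕ) + 1, by omega⟩]
    · simp [companion, powersMatrix, hk]
    · intro j _ hj
      simp [companion, hk, Fin.ext_iff.not.mp hj]
    · simp

lemma isUnit_powersMatrix_submatrix [Fintype κ] {L : R[X] →ₗ[R] κ → R} {N : ℕ} (e : κ ≃ Fin N)
    (hL : ∀ t, ∃ p : R[X], p.degree < N ∧ L p = t) :
    IsUnit ((powersMatrix L N).submatrix id e.symm) := by
  rw [← vecMul_surjective_iff_isUnit]
  intro s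
  obtain ⟨p, hpN, hp⟩ := hL (s ∘ e)
  refine ⟨fun k => p.coeff k, ?_⟩
  dsimp only
  have hsum : ∑ k : Fin N, C (p.coeff k) * X ^ (k : ℕ) = p :=
    (sum_fin (fun k c => C c * X ^ k) (by simp) hpN).trans p.sum_C_mul_X_pow_eq
  rw [← Equiv.coe_refl, submatrix_vecMul_equiv, Equiv.refl_symm, Equiv.coe_refl,
    Function.comp_id, vecMul_powersMatrix, hsum, hp]
  ext q; simp

end Matrix

theorem companion_similar_jordan_general {R : Type*} [CommRing R] (n m : ℕ) (α : Fin n → R)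
    (hα : ∀ i j : Fin n, i ≠ j → IsUnit (α i - α j)) :
    ∃ V : Matrix (Fin (n * m)) (Fin (n * m)) R,
      IsUnit V ∧
        (Matrix.of fun i j : Fin (n * m) =>
            if (i : ℕ) + 1 = n * m then
              -((∏ i' : Fin n, (X - C (α i')) ^ m).coeff (j : ℕ))
            else if (j : ℕ) = (i : ℕ) + 1 then (1 : R) else 0) * V =
          V *
            Matrix.reindex finProdFinEquiv finProdFinEquiv
              (Matrix.of fun p q : Fin n × Fin m =>
                if p = q then α p.1
                else if p.1 = q.1 ∧ (q.2 : ℕ) = (p.2 : ℕ) + 1 then (1 : R) else 0) := by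
  nontriviality R
  set F : R[X] := ∏ i : Fin n, (X - C (α i)) ^ m
  have hF : F.Monic := monic_prod_of_monic _ _ fun i _ => (monic_X_sub_C (α i)).pow m
  have hFdeg : F.natDegree = n * m := by
    simp [F, natDegree_prod_of_monic _ _ fun i _ => (monic_X_sub_C (α i)).pow m,
      (monic_X_sub_C _).natDegree_pow]
  have hdvd : ∀ i, (X - C (α i)) ^ m ∣ F := fun i => Finset.dvd_prod_of_mem _ (Finset.mem_univ i)
  have hsurj : ∀ t, ∃ p : R[X], p.degree < ↑(n * m) ∧ jets α m p = t := fun t => by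
    obtain ⟨p, hp, rfl⟩ := exists_degree_lt_jets_eq hα hF hdvd t
    exact ⟨p, by rwa [degree_eq_natDegree hF.ne_zero, hFdeg] at hp, rfl⟩
  refine ⟨(powersMatrix (jets α m) (n * m)).submatrix id finProdFinEquiv.symm,
    isUnit_powersMatrix_submatrix _ hsurj, ?_⟩
  change companion F (n * m) * _ = _ * (jordanMatrix α m).submatrix _ _
  rw [submatrix_mul_equiv, ← companion_mul_powersMatrix hF hFdeg (jets_X_mul α m)
    (jets_eq_zero_of_forall_dvd hdvd)]
  exact (submatrix_mul (companion F (n * m)) _ id id _ Function.bijective_id).symm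

/-- The companion matrix of `F = ∏ i, (X - C (α i))^m` is similar over `R` to the
block-diagonal Jordan matrix with `n` Jordan blocks of size `m` and eigenvalues
`α i`, provided the differences `α i - α j` (`i ≠ j`) are units. -/
theorem companion_similar_jordan {R : Type*} [CommRing R] (n m : ℕ)
    (hn : 1 ≤ n) (hm : 1 ≤ m) (α : Fin n → R)
    (hα : ∀ i j : Fin n, i ≠ j → IsUnit (α i - α j)) :
    ∃ V : Matrix (Fin (n * m)) (Fin (n * m)) R,
      IsUnit V ∧
        (Matrix.of fun i j : Fin (n * m) =>
            if (i : ℕ) + 1 = n * m then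
              -((∏ i' : Fin n, (X - C (α i')) ^ m).coeff (j : ℕ))
            else if (j : ℕ) = (i : ℕ) + 1 then (1 : R) else 0) * V =
          V *
            Matrix.reindex finProdFinEquiv finProdFinEquiv
              (Matrix.of fun p q : Fin n × Fin m =>
                if p = q then α p.1
                else if p.1 = q.1 ∧ (q.2 : ℕ) = (p.2 : ℕ) + 1 then (1 : R) else 0) :=
  companion_similar_jordan_general n m α hα
end

section
/- Let K be a field, let n, α, β be natural numbers, let C : Fin α → Submodule K (Fin n → K) be a family of linear codes of length n, and let A be an α × β matrix over K such that there exists an injection σ : Fin α → Fin β for which the α × α matrix (i, t) ↦ A i (σ t) is invertible (equivalently, the rows of A are linearly independent). Then the map sending a tuple (c_1, …, c_α) with c_i ∈ C i to the matrix-product codeword (fun j => ∑_{i} (A i j) • c_i) ∈ (Fin β → Fin n → K) is injective on ∏_{i} C i. In particular, when K is finite, the matrix-product code [C_1, …, C_α] · A has cardinality ∏_{i} |C i|. -/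
open Matrix

/-- If some `α` columns of `A` form an invertible matrix (rows of `A` linearly
independent), then the matrix-product encoding `(c_i) ↦ (fun j => ∑ i, A i j • c_i)` is
injective on `∏ i, C i`; in particular, over a finite field the matrix-product code
`[C₁,…,C_α]·A` has cardinality `∏ i, |C i|`. -/
theorem matrix_product_code_injective {K : Type*} [Field K] (n a b : ℕ)
    (C : Fin a → Submodule K (Fin n → K)) (A : Matrix (Fin a) (Fin b) K)
    (σ : Fin a → Fin b) (hσ : Function.Injective σ)
    (hinv : IsUnit (Matrix.of fun i t : Fin a => A i (σ t))) :
    Set.InjOn (fun c : Fin a → Fin n → K => fun j : Fin b => ∑ i, A i j • c i)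
        {c : Fin a → Fin n → K | ∀ i, c i ∈ C i} ∧
      (Finite K →
        Nat.card {x : Fin b → Fin n → K |
            ∃ c : Fin a → Fin n → K, (∀ i, c i ∈ C i) ∧ x = fun j => ∑ i, A i j • c i} =
          ∏ i, Nat.card (C i)) := by
  set M : Matrix (Fin a) (Fin a) K := Matrix.of fun i t : Fin a => A i (σ t)
  have hMT : IsUnit Mᵀ := (Matrix.isUnit_transpose _).mpr hinv
  have hinjv : Function.Injective (Mᵀ.mulVec) :=
    Matrix.mulVec_injective_iff_isUnit.mpr hMT
  have hinj : Set.InjOn (fun c : Fin a → Fin n → K => fun j : Fin b => ∑ i, A i j • c i)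
      {c : Fin a → Fin n → K | ∀ i, c i ∈ C i} := by
    intro c hc c' hc' h
    funext i k
    have key : ∀ k : Fin n, Mᵀ.mulVec (fun i => c i k) = Mᵀ.mulVec (fun i => c' i k) := by
      intro k
      funext t
      have := congrFun (congrFun h (σ t)) k
      simpa [Matrix.mulVec, dotProduct, M, mul_comm] using this
    exact congrFun (hinjv (key k)) i
  refine ⟨hinj, fun hK => ?_⟩
  have himg : {x : Fin b → Fin n → K |
        ∃ c : Fin a → Fin n → K, (∀ i, c i ∈ C i) ∧ x = fun j => ∑ i, A i j • c i} =
      (fun c : Fin a → Fin n → K => fun j : Fin b => ∑ i, A i j • c i) ''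
        {c : Fin a → Fin n → K | ∀ i, c i ∈ C i} := by
    ext x
    simp only [Set.mem_setOf_eq, Set.mem_image]
    exact ⟨fun ⟨c, h1, h2⟩ => ⟨c, h1, h2.symm⟩, fun ⟨c, h1, h2⟩ => ⟨c, h1, h2.symm⟩⟩
  rw [himg, Nat.card_coe_set_eq, Set.ncard_image_of_injOn hinj,
    ← Nat.card_coe_set_eq]
  have hset : {c : Fin a → Fin n → K | ∀ i, c i ∈ C i} = Set.pi Set.univ (fun i => (C i : Set (Fin n → K))) := by
    ext c; simp [Set.mem_pi]
  rw [hset]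
  rw [Nat.card_congr (Equiv.Set.univPi (fun i => (C i : Set (Fin n → K)))), Nat.card_pi]
  rfl
end

section
/- Let K be a finite field and let f ∈ K[Y] be monic of degree n ≥ 1 with f.coeff 0 ≠ 0. Set S = K[Y]/⟨f⟩ and let ε : S → K be the K-linear map sending the class of a polynomial g to (g %ₘ f).coeff 0. Then for every ideal D of S, the cardinality of D times the cardinality of D^{⊥₀} = {g ∈ S | ε(g · h) = 0 for all h ∈ D} equals the cardinality of S, i.e., |D| · |D^{⊥₀}| = |K|^n. -/
/-!
The pairing `(g, h) ↦ ε (g * h)` is a symmetric bilinear form on the `n`-dimensional `K`-space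
`S = K[Y]/⟨f⟩`, and `D^{⊥₀}` is the orthogonal of `D` for it. The form is nondegenerate: if
`r ≠ 0` has degree `d < n`, then `r Y^(n-d) ≡ r Y^(n-d) - lc(r) f (mod f)`, and the right-hand
side is already reduced with constant coefficient `-lc(r) f(0) ≠ 0`. Hence
`dim D + dim D^{⊥₀} = n`, and counting points over `K` gives `|D| |D^{⊥₀}| = |K|^n`.
-/

open Polynomial

namespace Polynomial

variable {R : Type*} [CommRing R]

theorem coeff_zero_mul_X_pow_modByMonic {f r : R[X]} (hf : f.Monic) {k : ℕ} (hk : 0 < k)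
    (hdeg : r.natDegree + k = f.natDegree) :
    ((r * X ^ k) %ₘ f).coeff 0 = -(r.leadingCoeff * f.coeff 0) := by
  nontriviality R
  set s := r * X ^ k - C r.leadingCoeff * f
  have hlt : s.degree < f.degree := by
    rw [degree_eq_natDegree hf.ne_zero, degree_lt_iff_coeff_zero]
    intro m hm
    rw [coeff_sub, coeff_mul_X_pow', coeff_C_mul, if_pos (by omega)]
    rcases hm.eq_or_lt with rfl | hm
    · rw [← hdeg, Nat.add_sub_cancel, hdeg, hf.coeff_natDegree, mul_one, leadingCoeff, sub_self]
    · rw [coeff_eq_zero_of_natDegree_lt (by omega), coeff_eq_zero_of_natDegree_lt hm, mul_zero,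
        sub_zero]
  rw [modByMonic_eq_of_dvd_sub (p₂ := s) hf ⟨C r.leadingCoeff, by ring⟩,
    (modByMonic_eq_self_iff hf).2 hlt]
  simp [s, hk.ne]

theorem dvd_of_forall_coeff_zero_mul_modByMonic_eq_zero [IsDomain R] {f p : R[X]}
    (hf : f.Monic) (h0 : f.coeff 0 ≠ 0) (hp : ∀ q, ((p * q) %ₘ f).coeff 0 = 0) : f ∣ p := by
  rw [← modByMonic_eq_zero_iff_dvd hf]
  by_contra hr
  set r := p %ₘ f
  have hlt : r.natDegree < f.natDegree := natDegree_lt_natDegree hr (degree_modByMonic_lt p hf)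
  set k := f.natDegree - r.natDegree
  have hpr : (p * X ^ k) %ₘ f = (r * X ^ k) %ₘ f :=
    modByMonic_eq_of_dvd_sub hf <| by
      rw [← sub_mul, ← neg_sub]
      exact (dvd_neg.2 (dvd_modByMonic_sub p f)).mul_right _
  have hpk := hp (X ^ k)
  rw [hpr, coeff_zero_mul_X_pow_modByMonic hf (by omega) (by omega), neg_eq_zero] at hpk
  exact mul_ne_zero (leadingCoeff_ne_zero.2 hr) h0 hpk

end Polynomial

namespace LinearMap.BilinForm

theorem Nondegenerate.natCard_mul_natCard_orthogonal {K V : Type*} [Field K] [AddCommGroup V]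
    [Module K V] [FiniteDimensional K V] {B : LinearMap.BilinForm K V} (hB : B.Nondegenerate)
    (W : Submodule K V) :
    Nat.card W * Nat.card (B.orthogonal W) = Nat.card K ^ Module.finrank K V := by
  rw [Module.natCard_eq_pow_finrank (K := K) (V := W),
    Module.natCard_eq_pow_finrank (K := K) (V := B.orthogonal W), ← pow_add,
    finrank_orthogonal hB, add_tsub_cancel_of_le W.finrank_le]

section mulForm

variable {R A : Type*} [CommRing R] [CommRing A] [Algebra R A]

def mulForm (ε : A →ₗ[R] R) : LinearMap.BilinForm R A := (LinearMap.mul R A).compr₂ ε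

@[simp]
theorem mulForm_apply (ε : A →ₗ[R] R) (g h : A) : mulForm ε g h = ε (g * h) := rfl

theorem mulForm_isSymm (ε : A →ₗ[R] R) : (mulForm ε).IsSymm :=
  isSymm_def.2 fun g h => by simp [mul_comm]

theorem coe_mulForm_orthogonal_restrictScalars (ε : A →ₗ[R] R) (D : Ideal A) :
    ((mulForm ε).orthogonal (D.restrictScalars R) : Set A) = {g | ∀ h ∈ D, ε (g * h) = 0} := by
  ext g
  simp [mem_orthogonal_iff, mul_comm]

end mulForm

theorem mulForm_nondegenerate_of_coeff_zero_ne_zero {R : Type*} [CommRing R] [IsDomain R]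
    {f : R[X]} (hf : f.Monic) (h0 : f.coeff 0 ≠ 0) (ε : (R[X] ⧸ Ideal.span {f}) →ₗ[R] R)
    (hε : ∀ g : R[X], ε (Ideal.Quotient.mk (Ideal.span {f}) g) = (g %ₘ f).coeff 0) :
    (mulForm ε).Nondegenerate := by
  refine (mulForm_isSymm ε).isRefl.nondegenerate_iff_separatingLeft.2 fun g hg => ?_
  obtain ⟨p, rfl⟩ := Ideal.Quotient.mk_surjective g
  rw [Ideal.Quotient.eq_zero_iff_mem, Ideal.mem_span_singleton]
  refine dvd_of_forall_coeff_zero_mul_modByMonic_eq_zero hf h0 fun q => ?_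
  rw [← hε, map_mul]
  exact hg _

end LinearMap.BilinForm

open LinearMap.BilinForm

theorem card_ideal_mul_card_perp0_dual_general {K : Type*} [Field K] [Fintype K]
    (f : K[X]) (hf : f.Monic) (h0 : f.coeff 0 ≠ 0)
    (ε : (K[X] ⧸ Ideal.span {f}) →ₗ[K] K)
    (hε : ∀ g : K[X], ε (Ideal.Quotient.mk (Ideal.span {f}) g) = (g %ₘ f).coeff 0)
    (D : Ideal (K[X] ⧸ Ideal.span {f})) :
    Nat.card D *
        Nat.card {g : K[X] ⧸ Ideal.span {f} | ∀ h ∈ D, ε (g * h) = 0} =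
      Fintype.card K ^ f.natDegree := by
  have := hf.finite_quotient
  rw [← coe_mulForm_orthogonal_restrictScalars, ← finrank_quotient_span_eq_natDegree,
    ← Nat.card_eq_fintype_card]
  exact (mulForm_nondegenerate_of_coeff_zero_ne_zero hf h0 ε hε).natCard_mul_natCard_orthogonal
    (D.restrictScalars K)

/-- For an ideal `D` of `S = K[Y]/⟨f⟩` (with `f` monic of degree `n ≥ 1` and nonzero
constant term), `|D| · |D^{⊥₀}| = |K|^n`, where the `⊥₀`-dual is taken with respect to
the annihilator inner product `⟨g, h⟩₀ = ((g h) %ₘ f).coeff 0`. -/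
theorem card_ideal_mul_card_perp0_dual {K : Type*} [Field K] [Fintype K]
    (f : K[X]) (hf : f.Monic) (hn : 1 ≤ f.natDegree) (h0 : f.coeff 0 ≠ 0)
    (ε : (K[X] ⧸ Ideal.span {f}) →ₗ[K] K)
    (hε : ∀ g : K[X], ε (Ideal.Quotient.mk (Ideal.span {f}) g) = (g %ₘ f).coeff 0)
    (D : Ideal (K[X] ⧸ Ideal.span {f})) :
    Nat.card D *
        Nat.card {g : K[X] ⧸ Ideal.span {f} | ∀ h ∈ D, ε (g * h) = 0} =
      Fintype.card K ^ f.natDegree :=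
  card_ideal_mul_card_perp0_dual_general f hf h0 ε hε D
end
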